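/- Let A be a real N×d matrix with AᵀA positive definite, with largest eigenvalue λ₁ and smallest eigenvalue λ_d > 0, K* = (AᵀA)⁻¹, b ∈ ℝ^N, and x* the minimizer of x ↦ ½‖Ax−b‖². Let (Ω, 𝔽, ℙ) be a probability space and w_b : Ω → ℝ^N a random vector with 𝔼‖w_b‖ ≤ ηm for some constant ηm < ∞. Let 0 < δ ≤ 1, ρ ∈ [0,1), and suppose the random sequence {x(t)} and deterministic matrices {K(t)} satisfy x(t+1) = x(t) − δK(t+1)Aᵀ(Ax(t) − b − w_b) and ‖K(t) − K*‖ ≤ ρᵗ‖K(0) − K*‖_F for all t. Then, with z(t) = x(t) − x*, for all t ≥ 0: 𝔼‖z(t+1)‖ ≤ (1 − δ + δλ₁‖K(0) − K*‖_F ρ^{t+1}) 𝔼‖z(t)‖ + δ ηm √λ₁ ‖K(0) − K*‖_F ρ^{t+1} + δ ηm √(1/λ_d). -/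

import Mathlib

open Matrix Filter Finset MeasureTheory ProbabilityTheory

/-- The spectral norm (operator 2-norm) of a real rectangular matrix, i.e. the operator
norm of the induced linear map between Euclidean spaces. -/
noncomputable def specNorm {m n : ℕ} (M : Matrix (Fin m) (Fin n) ℝ) : ℝ :=
  ‖LinearMap.toContinuousLinearMap (Matrix.toEuclideanLin M)‖

/-- Matrix-vector multiplication, viewed as a map between Euclidean spaces. -/
noncomputable def mulVecE {m n : ℕ} (M : Matrix (Fin m) (Fin n) ℝ)
    (v : EuclideanSpace ℝ (Fin n)) : EuclideanSpace ℝ (Fin m) :=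
  Matrix.toEuclideanLin M v

/-- The `j`-th column of a matrix, as an element of Euclidean space. -/
noncomputable def colE {m n : ℕ} (M : Matrix (Fin m) (Fin n) ℝ) (j : Fin n) :
    EuclideanSpace ℝ (Fin m) := WithLp.toLp 2 (fun i => M i j)

/-- The Frobenius norm of a matrix: square root of the sum of the squared Euclidean
norms of its columns. -/
noncomputable def frobNorm {m n : ℕ} (M : Matrix (Fin m) (Fin n) ℝ) : ℝ :=
  Real.sqrt (∑ j, ‖colE M j‖ ^ 2)

/-- The l¹-norm of a vector. -/
noncomputable def l1Norm {n : ℕ} (v : EuclideanSpace ℝ (Fin n)) : ℝ := ∑ i, |v i|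

/-! Write `M = AᵀA`, `E = K (t + 1) - M⁻¹` and `z = x t - xstar`. The normal equations
`Aᵀ (A xstar - b) = 0` turn one step of the iteration into
`z ↦ (1 - δ) z - δ E (M z - Aᵀ w) + δ M⁻¹ Aᵀ w`, so the triangle inequality bounds the new error
pointwise by an affine function of `‖z‖` and `‖w‖`, which is then integrated. The spectral norms
are read off the eigenvalues of `M` by unitary diagonalization: `‖M‖ ≤ λ₁`, `‖Aᵀ‖ = √‖M‖` by the
C*-identity, and `‖M⁻¹ Aᵀ‖² = ‖M⁻¹‖ ≤ 1 / λ_d` because `(M⁻¹ Aᵀ) (M⁻¹ Aᵀ)ᵀ = M⁻¹`. -/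

lemma RCLike.norm_ofReal_comp {𝕜 : Type*} [RCLike 𝕜] {n : Type*} [Fintype n] (v : n → ℝ) :
    ‖(RCLike.ofReal ∘ v : n → 𝕜)‖ = ‖v‖ := by
  simp [Pi.norm_def]

namespace Matrix
open scoped Matrix.Norms.L2Operator ComplexOrder

variable {𝕜 : Type*} [RCLike 𝕜] {m n : Type*} [Fintype m] [Fintype n] [DecidableEq n]

lemma l2_opNorm_unitary_mul_diagonal_mul_star {U : Matrix n n 𝕜}
    (hU : U ∈ unitary (Matrix n n 𝕜)) (v : n → 𝕜) : ‖U * diagonal v * star U‖ = ‖v‖ := by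
  rw [CStarRing.norm_mul_mem_unitary _ (Unitary.star_mem hU), CStarRing.norm_mem_unitary_mul _ hU,
    l2_opNorm_diagonal]

namespace IsHermitian
variable {A : Matrix n n 𝕜} (hA : A.IsHermitian)

lemma l2_opNorm_eq_norm_eigenvalues : ‖A‖ = ‖hA.eigenvalues‖ := by
  conv_lhs => rw [hA.spectral_theorem, Unitary.conjStarAlgAut_apply]
  rw [l2_opNorm_unitary_mul_diagonal_mul_star (SetLike.coe_mem _), RCLike.norm_ofReal_comp]

lemma inv_eq_of_eigenvalues_ne_zero (h : ∀ i, hA.eigenvalues i ≠ 0) :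
    A⁻¹ = (hA.eigenvectorUnitary : Matrix n n 𝕜) * diagonal (RCLike.ofReal ∘ hA.eigenvalues⁻¹)
      * star (hA.eigenvectorUnitary : Matrix n n 𝕜) := by
  refine inv_eq_right_inv ?_
  have hD : diagonal (RCLike.ofReal ∘ hA.eigenvalues)
      * diagonal (RCLike.ofReal ∘ hA.eigenvalues⁻¹) = (1 : Matrix n n 𝕜) := by
    rw [diagonal_mul_diagonal, ← diagonal_one]
    congr 1; ext i; simp [h i]
  conv_lhs => arg 1; rw [hA.spectral_theorem, Unitary.conjStarAlgAut_apply]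
  simp only [Matrix.mul_assoc]
  rw [← Matrix.mul_assoc (star _), Unitary.coe_star_mul_self, Matrix.one_mul,
    ← Matrix.mul_assoc (diagonal _), hD, Matrix.one_mul]
  exact Unitary.mul_star_self_of_mem (SetLike.coe_mem _)

lemma l2_opNorm_inv_le {c : ℝ} (hc : 0 < c) (h : ∀ i, c ≤ hA.eigenvalues i) : ‖A⁻¹‖ ≤ c⁻¹ := by
  have hpos i : 0 < hA.eigenvalues i := hc.trans_le (h i)
  rw [hA.inv_eq_of_eigenvalues_ne_zero fun i => (hpos i).ne',
    l2_opNorm_unitary_mul_diagonal_mul_star (SetLike.coe_mem _), RCLike.norm_ofReal_comp]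
  refine (pi_norm_le_iff_of_nonneg (inv_nonneg.2 hc.le)).2 fun i => ?_
  rw [Pi.inv_apply, norm_inv, Real.norm_of_nonneg (hpos i).le]
  exact inv_anti₀ hc (h i)

end IsHermitian

lemma l2_opNorm_mul_self_le_of_eigenvalues_le (A : Matrix m n 𝕜) (hH : (Aᴴ * A).IsHermitian)
    {c : ℝ} (hc : 0 ≤ c) (h : ∀ i, hH.eigenvalues i ≤ c) : ‖A‖ * ‖A‖ ≤ c := by
  rw [← l2_opNorm_conjTranspose_mul_self, hH.l2_opNorm_eq_norm_eigenvalues]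
  refine (pi_norm_le_iff_of_nonneg hc).2 fun i => ?_
  rw [Real.norm_of_nonneg ((posSemidef_conjTranspose_mul_self A).eigenvalues_nonneg i)]
  exact h i

lemma l2_opNorm_pinv_mul_self [DecidableEq m] (A : Matrix m n 𝕜) (hA : IsUnit (Aᴴ * A).det) :
    ‖(Aᴴ * A)⁻¹ * Aᴴ‖ * ‖(Aᴴ * A)⁻¹ * Aᴴ‖ = ‖(Aᴴ * A)⁻¹‖ := by
  set B := (Aᴴ * A)⁻¹ * Aᴴ
  have hBB : B * Bᴴ = (Aᴴ * A)⁻¹ := by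
    simp only [B, conjTranspose_mul, conjTranspose_conjTranspose, conjTranspose_nonsing_inv,
      Matrix.mul_assoc]
    rw [← Matrix.mul_assoc Aᴴ, mul_nonsing_inv _ hA, Matrix.mul_one]
  rw [← l2_opNorm_conjTranspose B, ← l2_opNorm_conjTranspose_mul_self, conjTranspose_conjTranspose,
    hBB]

end Matrix

section
open scoped RealInnerProductSpace Matrix.Norms.L2Operator

lemma inner_eq_zero_of_forall_norm_sq_le {E : Type*} [NormedAddCommGroup E] [InnerProductSpace ℝ E]
    {r v : E} (h : ∀ s : ℝ, ‖r‖ ^ 2 ≤ ‖r + s • v‖ ^ 2) : ⟪r, v⟫ = 0 := by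
  have hquad : ∀ s : ℝ, 0 ≤ ‖v‖ ^ 2 * (s * s) + 2 * ⟪r, v⟫ * s + 0 := fun s => by
    have := h s
    rw [norm_add_sq_real, real_inner_smul_right, norm_smul, mul_pow, Real.norm_eq_abs, sq_abs] at this
    linarith
  have := discrim_le_zero hquad
  rw [discrim] at this
  nlinarith [sq_nonneg ⟪r, v⟫]

section MulVecE
variable {m n p : ℕ}

lemma mulVecE_mul (M : Matrix (Fin m) (Fin n) ℝ) (P : Matrix (Fin n) (Fin p) ℝ)
    (v : EuclideanSpace ℝ (Fin p)) : mulVecE (M * P) v = mulVecE M (mulVecE P v) := by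
  simp [mulVecE, Matrix.toLpLin_apply, Matrix.mulVec_mulVec]

lemma mulVecE_sub (M : Matrix (Fin m) (Fin n) ℝ) (u v : EuclideanSpace ℝ (Fin n)) :
    mulVecE M (u - v) = mulVecE M u - mulVecE M v := map_sub _ _ _

lemma mulVecE_add (M : Matrix (Fin m) (Fin n) ℝ) (u v : EuclideanSpace ℝ (Fin n)) :
    mulVecE M (u + v) = mulVecE M u + mulVecE M v := map_add _ _ _

lemma mulVecE_smul (M : Matrix (Fin m) (Fin n) ℝ) (c : ℝ) (v : EuclideanSpace ℝ (Fin n)) :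
    mulVecE M (c • v) = c • mulVecE M v := map_smul _ _ _

lemma sub_mulVecE (M P : Matrix (Fin m) (Fin n) ℝ) (v : EuclideanSpace ℝ (Fin n)) :
    mulVecE (M - P) v = mulVecE M v - mulVecE P v := by
  simp [mulVecE]

lemma inner_mulVecE_left (M : Matrix (Fin m) (Fin n) ℝ) (v : EuclideanSpace ℝ (Fin n))
    (w : EuclideanSpace ℝ (Fin m)) : ⟪mulVecE M v, w⟫ = ⟪v, mulVecE Mᵀ w⟫ := by
  rw [mulVecE, mulVecE, ← conjTranspose_eq_transpose_of_trivial,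
    Matrix.toEuclideanLin_conjTranspose_eq_adjoint, LinearMap.adjoint_inner_right]

lemma add_mulVecE (M P : Matrix (Fin m) (Fin n) ℝ) (v : EuclideanSpace ℝ (Fin n)) :
    mulVecE (M + P) v = mulVecE M v + mulVecE P v := by
  simp [mulVecE]

lemma specNorm_eq_l2_opNorm (M : Matrix (Fin m) (Fin n) ℝ) : specNorm M = ‖M‖ := rfl

lemma specNorm_nonneg (M : Matrix (Fin m) (Fin n) ℝ) : 0 ≤ specNorm M := norm_nonneg _

lemma norm_mulVecE_le (M : Matrix (Fin m) (Fin n) ℝ) (v : EuclideanSpace ℝ (Fin n)) :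
    ‖mulVecE M v‖ ≤ specNorm M * ‖v‖ :=
  (LinearMap.toContinuousLinearMap (Matrix.toEuclideanLin M)).le_opNorm v

end MulVecE

section LeastSquares
variable {N d : ℕ} (A : Matrix (Fin N) (Fin d) ℝ)

lemma specNorm_transpose_mul_self_le {c : ℝ} (hc : 0 ≤ c) (hH : (Aᵀ * A).IsHermitian)
    (h : ∀ i, hH.eigenvalues i ≤ c) : specNorm (Aᵀ * A) ≤ c := by
  rw [specNorm_eq_l2_opNorm, ← conjTranspose_eq_transpose_of_trivial,
    Matrix.l2_opNorm_conjTranspose_mul_self]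
  exact A.l2_opNorm_mul_self_le_of_eigenvalues_le hH hc h

lemma specNorm_transpose_le_sqrt {c : ℝ} (hc : 0 ≤ c) (hH : (Aᵀ * A).IsHermitian)
    (h : ∀ i, hH.eigenvalues i ≤ c) : specNorm Aᵀ ≤ Real.sqrt c := by
  rw [specNorm_eq_l2_opNorm, ← conjTranspose_eq_transpose_of_trivial,
    Matrix.l2_opNorm_conjTranspose, Real.le_sqrt (norm_nonneg _) hc, sq]
  exact A.l2_opNorm_mul_self_le_of_eigenvalues_le hH hc h

lemma specNorm_pinv_le {c : ℝ} (hc : 0 < c) (hPD : (Aᵀ * A).PosDef)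
    (h : ∀ i, c ≤ hPD.isHermitian.eigenvalues i) :
    specNorm ((Aᵀ * A)⁻¹ * Aᵀ) ≤ Real.sqrt (1 / c) := by
  have hdet : IsUnit (Aᴴ * A).det := by
    rw [conjTranspose_eq_transpose_of_trivial, ← isUnit_iff_isUnit_det]; exact hPD.isUnit
  rw [specNorm_eq_l2_opNorm, ← conjTranspose_eq_transpose_of_trivial,
    Real.le_sqrt (norm_nonneg _) (by positivity), sq, A.l2_opNorm_pinv_mul_self hdet, one_div]
  exact hPD.isHermitian.l2_opNorm_inv_le hc h

variable {A}

lemma transpose_mulVecE_residual_eq_zero {b : EuclideanSpace ℝ (Fin N)}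
    {xstar : EuclideanSpace ℝ (Fin d)}
    (hmin : ∀ y, (1 / 2) * ‖mulVecE A xstar - b‖ ^ 2 ≤ (1 / 2) * ‖mulVecE A y - b‖ ^ 2) :
    mulVecE Aᵀ (mulVecE A xstar - b) = 0 := by
  have hperp : ⟪mulVecE A xstar - b, mulVecE A (mulVecE Aᵀ (mulVecE A xstar - b))⟫ = 0 := by
    refine inner_eq_zero_of_forall_norm_sq_le fun s => ?_
    have := hmin (xstar + s • mulVecE Aᵀ (mulVecE A xstar - b))
    rw [mulVecE_add, mulVecE_smul, add_sub_right_comm] at this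
    linarith
  rw [real_inner_comm, inner_mulVecE_left] at hperp
  exact inner_self_eq_zero.mp hperp

lemma ipg_step_sub_eq {b : EuclideanSpace ℝ (Fin N)} {xstar : EuclideanSpace ℝ (Fin d)}
    (hnormal : mulVecE Aᵀ (mulVecE A xstar - b) = 0) (hdet : IsUnit (Aᵀ * A).det)
    (K : Matrix (Fin d) (Fin d) ℝ) (x : EuclideanSpace ℝ (Fin d)) (w : EuclideanSpace ℝ (Fin N))
    (δ : ℝ) :
    x - δ • mulVecE K (mulVecE Aᵀ (mulVecE A x - b - w)) - xstar =
      (1 - δ) • (x - xstar)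
        - δ • mulVecE (K - (Aᵀ * A)⁻¹) (mulVecE (Aᵀ * A) (x - xstar) - mulVecE Aᵀ w)
        + δ • mulVecE ((Aᵀ * A)⁻¹ * Aᵀ) w := by
  have hgrad : mulVecE Aᵀ (mulVecE A x - b - w) = mulVecE (Aᵀ * A) (x - xstar) - mulVecE Aᵀ w := by
    have : mulVecE A x - b - w = mulVecE A (x - xstar) + (mulVecE A xstar - b) - w := by
      rw [mulVecE_sub]; abel
    rw [this, mulVecE_sub, mulVecE_add, hnormal, add_zero, mulVecE_mul]
  have hK : K = (K - (Aᵀ * A)⁻¹) + (Aᵀ * A)⁻¹ := by abel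
  have hinv : mulVecE (Aᵀ * A)⁻¹ (mulVecE (Aᵀ * A) (x - xstar)) = x - xstar := by
    rw [← mulVecE_mul, nonsing_inv_mul _ hdet]; simp [mulVecE]
  rw [hgrad]
  conv_lhs => rw [hK]
  rw [add_mulVecE, mulVecE_sub (Aᵀ * A)⁻¹, hinv, ← mulVecE_mul]
  module

lemma norm_ipg_step_sub_le {b : EuclideanSpace ℝ (Fin N)} {xstar : EuclideanSpace ℝ (Fin d)}
    (hnormal : mulVecE Aᵀ (mulVecE A xstar - b) = 0) (hdet : IsUnit (Aᵀ * A).det)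
    (K : Matrix (Fin d) (Fin d) ℝ) (x : EuclideanSpace ℝ (Fin d)) (w : EuclideanSpace ℝ (Fin N))
    {δ : ℝ} (hδ0 : 0 ≤ δ) (hδ1 : δ ≤ 1) {e l s p : ℝ}
    (he : specNorm (K - (Aᵀ * A)⁻¹) ≤ e) (hl : specNorm (Aᵀ * A) ≤ l) (hs : specNorm Aᵀ ≤ s)
    (hp : specNorm ((Aᵀ * A)⁻¹ * Aᵀ) ≤ p) :
    ‖x - δ • mulVecE K (mulVecE Aᵀ (mulVecE A x - b - w)) - xstar‖
      ≤ (1 - δ + δ * e * l) * ‖x - xstar‖ + (δ * e * s + δ * p) * ‖w‖ := by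
  rw [ipg_step_sub_eq hnormal hdet]
  set z := x - xstar
  have hgrad : ‖mulVecE (Aᵀ * A) z - mulVecE Aᵀ w‖ ≤ l * ‖z‖ + s * ‖w‖ :=
    calc _ ≤ specNorm (Aᵀ * A) * ‖z‖ + specNorm Aᵀ * ‖w‖ :=
          (norm_sub_le _ _).trans (add_le_add (norm_mulVecE_le _ _) (norm_mulVecE_le _ _))
      _ ≤ l * ‖z‖ + s * ‖w‖ := by gcongr
  have hE : ‖mulVecE (K - (Aᵀ * A)⁻¹) (mulVecE (Aᵀ * A) z - mulVecE Aᵀ w)‖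
      ≤ e * (l * ‖z‖ + s * ‖w‖) :=
    (norm_mulVecE_le _ _).trans
      (mul_le_mul he hgrad (norm_nonneg _) ((specNorm_nonneg _).trans he))
  have hP : ‖mulVecE ((Aᵀ * A)⁻¹ * Aᵀ) w‖ ≤ p * ‖w‖ :=
    (norm_mulVecE_le _ _).trans (by gcongr)
  calc _ ≤ ‖(1 - δ) • z‖
          + ‖δ • mulVecE (K - (Aᵀ * A)⁻¹) (mulVecE (Aᵀ * A) z - mulVecE Aᵀ w)‖
          + ‖δ • mulVecE ((Aᵀ * A)⁻¹ * Aᵀ) w‖ :=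
        (norm_add_le _ _).trans (add_le_add_left (norm_sub_le _ _) _)
    _ ≤ (1 - δ) * ‖z‖ + δ * (e * (l * ‖z‖ + s * ‖w‖)) + δ * (p * ‖w‖) := by
        rw [norm_smul, norm_smul, norm_smul, Real.norm_of_nonneg (sub_nonneg.2 hδ1),
          Real.norm_of_nonneg hδ0]
        gcongr
    _ = _ := by ring

end LeastSquares

end

lemma integral_le_mul_integral_add_mul {Ω : Type*} [MeasurableSpace Ω] {μ : Measure Ω}
    {f g h : Ω → ℝ} (hf : Integrable f μ) (hg : Integrable g μ) (hh : Integrable h μ)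
    {a c η : ℝ} (hc : 0 ≤ c) (hfgh : ∀ o, f o ≤ a * g o + c * h o) (hη : ∫ o, h o ∂μ ≤ η) :
    ∫ o, f o ∂μ ≤ a * ∫ o, g o ∂μ + c * η :=
  calc ∫ o, f o ∂μ ≤ ∫ o, a * g o + c * h o ∂μ :=
        integral_mono hf ((hg.const_mul a).add (hh.const_mul c)) hfgh
    _ = a * ∫ o, g o ∂μ + c * ∫ o, h o ∂μ := by
        rw [integral_add (hg.const_mul a) (hh.const_mul c), integral_const_mul, integral_const_mul]
    _ ≤ a * ∫ o, g o ∂μ + c * η := by gcongr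

theorem ipg_observation_noise_expected_error_bound_general {N d : ℕ}
    (A : Matrix (Fin N) (Fin d) ℝ) (hPD : (Aᵀ * A).PosDef)
    (lam1 lamd : ℝ)
    (hlam1 : IsGreatest (Set.range hPD.isHermitian.eigenvalues) lam1)
    (hlamd : IsLeast (Set.range hPD.isHermitian.eigenvalues) lamd)
    (b : EuclideanSpace ℝ (Fin N)) (xstar : EuclideanSpace ℝ (Fin d))
    (hmin : ∀ y, (1 / 2) * ‖mulVecE A xstar - b‖ ^ 2 ≤ (1 / 2) * ‖mulVecE A y - b‖ ^ 2)
    {Ω : Type} [MeasurableSpace Ω] (μ : Measure Ω)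
    (wb : Ω → EuclideanSpace ℝ (Fin N)) (ηm : ℝ)
    (hwb_int : Integrable (fun o => ‖wb o‖) μ)
    (hwb : ∫ o, ‖wb o‖ ∂μ ≤ ηm)
    (δ : ℝ) (hδ0 : 0 < δ) (hδ1 : δ ≤ 1)
    (ρ : ℝ)
    (x : ℕ → Ω → EuclideanSpace ℝ (Fin d)) (K : ℕ → Matrix (Fin d) (Fin d) ℝ)
    (hrec : ∀ t o, x (t + 1) o =
      x t o - δ • mulVecE (K (t + 1)) (mulVecE Aᵀ (mulVecE A (x t o) - b - wb o)))
    (hdecay : ∀ t, specNorm (K t - (Aᵀ * A)⁻¹) ≤ ρ ^ t * frobNorm (K 0 - (Aᵀ * A)⁻¹))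
    (hint : ∀ t, Integrable (fun o => ‖x t o - xstar‖) μ) :
    ∀ t, (∫ o, ‖x (t + 1) o - xstar‖ ∂μ) ≤
      (1 - δ + δ * lam1 * frobNorm (K 0 - (Aᵀ * A)⁻¹) * ρ ^ (t + 1))
          * (∫ o, ‖x t o - xstar‖ ∂μ)
        + δ * ηm * Real.sqrt lam1 * frobNorm (K 0 - (Aᵀ * A)⁻¹) * ρ ^ (t + 1)
        + δ * ηm * Real.sqrt (1 / lamd) := by
  intro t
  have hlam1_pos : 0 < lam1 := by obtain ⟨i, rfl⟩ := hlam1.1; exact hPD.eigenvalues_pos i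
  have hlamd_pos : 0 < lamd := by obtain ⟨i, rfl⟩ := hlamd.1; exact hPD.eigenvalues_pos i
  have hupper i : hPD.isHermitian.eigenvalues i ≤ lam1 := hlam1.2 ⟨i, rfl⟩
  have hlower i : lamd ≤ hPD.isHermitian.eigenvalues i := hlamd.2 ⟨i, rfl⟩
  have hdet : IsUnit (Aᵀ * A).det := (isUnit_iff_isUnit_det _).mp hPD.isUnit
  have hstep o := norm_ipg_step_sub_le (transpose_mulVecE_residual_eq_zero hmin) hdet (K (t + 1))
    (x t o) (wb o) hδ0.le hδ1 (hdecay (t + 1))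
    (specNorm_transpose_mul_self_le A hlam1_pos.le _ hupper)
    (specNorm_transpose_le_sqrt A hlam1_pos.le _ hupper) (specNorm_pinv_le A hlamd_pos hPD hlower)
  have hdecay_nonneg := (specNorm_nonneg _).trans (hdecay (t + 1))
  calc _ ≤ _ := integral_le_mul_integral_add_mul (hint (t + 1)) (hint t) hwb_int (by positivity)
        (fun o => hrec t o ▸ hstep o) hwb
    _ = _ := by ring

/-- Theorem 1 of the paper, equation (13). Robustness of the IPG
method against observation noise: one-step bound on the expected estimation error. -/
theorem ipg_observation_noise_expected_error_bound {N d : ℕ}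
    (A : Matrix (Fin N) (Fin d) ℝ) (hPD : (Aᵀ * A).PosDef)
    (lam1 lamd : ℝ)
    (hlam1 : IsGreatest (Set.range hPD.isHermitian.eigenvalues) lam1)
    (hlamd : IsLeast (Set.range hPD.isHermitian.eigenvalues) lamd)
    (hlamdpos : 0 < lamd)
    (b : EuclideanSpace ℝ (Fin N)) (xstar : EuclideanSpace ℝ (Fin d))
    (hmin : ∀ y, (1 / 2) * ‖mulVecE A xstar - b‖ ^ 2 ≤ (1 / 2) * ‖mulVecE A y - b‖ ^ 2)
    {Ω : Type} [MeasurableSpace Ω] (μ : Measure Ω) [IsProbabilityMeasure μ]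
    (wb : Ω → EuclideanSpace ℝ (Fin N)) (ηm : ℝ)
    (hwb_int : Integrable (fun o => ‖wb o‖) μ)
    (hwb : ∫ o, ‖wb o‖ ∂μ ≤ ηm)
    (δ : ℝ) (hδ0 : 0 < δ) (hδ1 : δ ≤ 1)
    (ρ : ℝ) (hρ0 : 0 ≤ ρ) (hρ1 : ρ < 1)
    (x : ℕ → Ω → EuclideanSpace ℝ (Fin d)) (K : ℕ → Matrix (Fin d) (Fin d) ℝ)
    (hrec : ∀ t o, x (t + 1) o =
      x t o - δ • mulVecE (K (t + 1)) (mulVecE Aᵀ (mulVecE A (x t o) - b - wb o)))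
    (hdecay : ∀ t, specNorm (K t - (Aᵀ * A)⁻¹) ≤ ρ ^ t * frobNorm (K 0 - (Aᵀ * A)⁻¹))
    (hint : ∀ t, Integrable (fun o => ‖x t o - xstar‖) μ) :
    ∀ t, (∫ o, ‖x (t + 1) o - xstar‖ ∂μ) ≤
      (1 - δ + δ * lam1 * frobNorm (K 0 - (Aᵀ * A)⁻¹) * ρ ^ (t + 1))
          * (∫ o, ‖x t o - xstar‖ ∂μ)
        + δ * ηm * Real.sqrt lam1 * frobNorm (K 0 - (Aᵀ * A)⁻¹) * ρ ^ (t + 1)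
        + δ * ηm * Real.sqrt (1 / lamd) :=
  ipg_observation_noise_expected_error_bound_general A hPD lam1 lamd hlam1 hlamd b xstar hmin μ wb
    ηm hwb_int hwb δ hδ0 hδ1 ρ x K hrec hdecay hint
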